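/- Let φ₀, φ₁ : [0,1] → [0,1] be strictly increasing maps with φ₀(0)=0, φ₁(1)=1, and whose derivatives satisfy 0 < ρ̃ ≤ φᵢ'(x) ≤ ρ < 1/2 for all x ∈ [0,1]. Then for every n ≥ 1, as ω₀…ω_{n−1} ranges over {0,1}^n, the intervals [φ_{ω₀^{n−1}}(0), φ_{ω₀^{n−1}}(1)] are pairwise disjoint, and any two distinct such intervals are at distance at least ρ̃ⁿ(1−2ρ) from each other. -/

import Mathlib

/-!
The first-level pieces are separated: by the derivative bounds `φ₀([0,1]) ⊆ [0, ρ]` and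
`φ₁([0,1]) ⊆ [1 - ρ, 1]`, so every point of the first lies at least `1 - 2ρ` below every point
of the second. Two distinct words of length `n` share the tail after their last differing
letter; before that tail is applied, their intervals lie in `φ₀([0,1])` and `φ₁([0,1])`
(in some order). The tail is a composition of fewer than `n` maps, each of which is increasing and
stretches distances by a factor at least `ρ̃`, so the gap `1 - 2ρ` survives as at least
`ρ̃ⁿ (1 - 2ρ)`.
-/

/-- Composition along a word: the first letter of the list is applied first. -/
def compWord (φ : Fin 2 → ℝ → ℝ) (ω : List (Fin 2)) (x : ℝ) : ℝ :=
  ω.foldl (fun y i => φ i y) x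

namespace List

variable {α : Type*}

theorem exists_common_prefix_of_ne :
    ∀ {u v : List α}, u.length = v.length → u ≠ v →
      ∃ c i j t t', i ≠ j ∧ u = c ++ i :: t ∧ v = c ++ j :: t'
  | [], [], _, hne => absurd rfl hne
  | x :: u, y :: v, hlen, hne => by
    by_cases hxy : x = y
    · subst hxy
      obtain ⟨c, i, j, t, t', hij, rfl, rfl, -⟩ :=
        exists_common_prefix_of_ne (by simpa using hlen) fun h => hne (congrArg (x :: ·) h)
      exact ⟨x :: c, i, j, t, t', hij, rfl, rfl⟩
    · exact ⟨[], x, y, u, v, hxy, rfl, rfl⟩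

theorem exists_common_suffix_of_ne {u v : List α} (hlen : u.length = v.length) (hne : u ≠ v) :
    ∃ p q i j t, i ≠ j ∧ u = p ++ i :: t ∧ v = q ++ j :: t := by
  obtain ⟨c, i, j, t, t', hij, hu, hv⟩ :=
    exists_common_prefix_of_ne (u := u.reverse) (v := v.reverse) (by simpa using hlen)
      fun h => hne (reverse_injective h)
  refine ⟨t.reverse, t'.reverse, i, j, c.reverse, hij, ?_, ?_⟩
  · simpa using congrArg reverse hu
  · simpa using congrArg reverse hv

end List

theorem Convex.mul_sub_le_image_sub_of_le_hasDerivAt {s : Set ℝ} (hs : Convex ℝ s)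
    {f f' : ℝ → ℝ} {C : ℝ} (hf : ∀ x ∈ s, HasDerivAt f (f' x) x) (hC : ∀ x ∈ s, C ≤ f' x) :
    ∀ x ∈ s, ∀ y ∈ s, x ≤ y → C * (y - x) ≤ f y - f x :=
  hs.mul_sub_le_image_sub_of_le_deriv (fun x hx => (hf x hx).continuousAt.continuousWithinAt)
    (fun x hx => (hf x (interior_subset hx)).differentiableAt.differentiableWithinAt)
    fun x hx => (hf x (interior_subset hx)).deriv ▸ hC x (interior_subset hx)

theorem Convex.image_sub_le_mul_sub_of_hasDerivAt_le {s : Set ℝ} (hs : Convex ℝ s)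
    {f f' : ℝ → ℝ} {C : ℝ} (hf : ∀ x ∈ s, HasDerivAt f (f' x) x) (hC : ∀ x ∈ s, f' x ≤ C) :
    ∀ x ∈ s, ∀ y ∈ s, x ≤ y → f y - f x ≤ C * (y - x) :=
  hs.image_sub_le_mul_sub_of_deriv_le (fun x hx => (hf x hx).continuousAt.continuousWithinAt)
    (fun x hx => (hf x (interior_subset hx)).differentiableAt.differentiableWithinAt)
    fun x hx => (hf x (interior_subset hx)).deriv ▸ hC x (interior_subset hx)

theorem monotoneOn_of_mul_sub_le {f : ℝ → ℝ} {s : Set ℝ} {c : ℝ} (hc : 0 ≤ c)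
    (h : ∀ x ∈ s, ∀ y ∈ s, x ≤ y → c * (y - x) ≤ f y - f x) : MonotoneOn f s :=
  fun x hx y hy hxy => by nlinarith [h x hx y hy hxy, mul_nonneg hc (sub_nonneg.2 hxy)]

section compWord

variable {φ : Fin 2 → ℝ → ℝ} {s : Set ℝ} {c γ : ℝ}

@[simp]
theorem compWord_nil (x : ℝ) : compWord φ [] x = x := rfl

@[simp]
theorem compWord_append_cons (p t : List (Fin 2)) (i : Fin 2) (x : ℝ) :
    compWord φ (p ++ i :: t) x = compWord φ t (φ i (compWord φ p x)) :=
  List.foldl_append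

theorem compWord_mapsTo (hmaps : ∀ i, Set.MapsTo (φ i) s s) :
    ∀ l, Set.MapsTo (compWord φ l) s s
  | [] => fun _ hx => hx
  | i :: l => fun _ hx => compWord_mapsTo hmaps l (hmaps i hx)

theorem pow_length_mul_sub_le_compWord_sub (hc : 0 ≤ c) (hmaps : ∀ i, Set.MapsTo (φ i) s s)
    (hexp : ∀ i, ∀ x ∈ s, ∀ y ∈ s, x ≤ y → c * (y - x) ≤ φ i y - φ i x) :
    ∀ (l : List (Fin 2)) {x y : ℝ}, x ∈ s → y ∈ s → x ≤ y →
      c ^ l.length * (y - x) ≤ compWord φ l y - compWord φ l x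
  | [], _, _, _, _, _ => by simp
  | i :: l, x, y, hx, hy, hxy => by
    have ih := pow_length_mul_sub_le_compWord_sub hc hmaps hexp l (hmaps i hx) (hmaps i hy)
      (monotoneOn_of_mul_sub_le hc (hexp i) hx hy hxy)
    calc c ^ (i :: l).length * (y - x) = c ^ l.length * (c * (y - x)) := by
          rw [List.length_cons, pow_succ, mul_assoc]
      _ ≤ c ^ l.length * (φ i y - φ i x) := by gcongr; exact hexp i x hx y hy hxy
      _ ≤ _ := ih

theorem compWord_separated (hc0 : 0 ≤ c) (hc1 : c ≤ 1) (hγ : 0 ≤ γ)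
    (hmaps : ∀ i, Set.MapsTo (φ i) s s)
    (hexp : ∀ i, ∀ x ∈ s, ∀ y ∈ s, x ≤ y → c * (y - x) ≤ φ i y - φ i x)
    (hgap : ∀ u ∈ s, ∀ v ∈ s, φ 0 u + γ ≤ φ 1 v) {a b : ℝ} (ha : a ∈ s) (hb : b ∈ s)
    {ω ω' : List (Fin 2)} (hlen : ω.length = ω'.length) (hne : ω ≠ ω') :
    compWord φ ω b + c ^ ω.length * γ ≤ compWord φ ω' a ∨
      compWord φ ω' b + c ^ ω.length * γ ≤ compWord φ ω a := by
  obtain ⟨p, q, i, j, t, hij, rfl, rfl⟩ := List.exists_common_suffix_of_ne hlen hne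
  have key : ∀ (p q : List (Fin 2)) (N : ℕ), t.length ≤ N →
      compWord φ (p ++ 0 :: t) b + c ^ N * γ ≤ compWord φ (q ++ 1 :: t) a := by
    intro p q N hle
    have hu := compWord_mapsTo hmaps p hb
    have hv := compWord_mapsTo hmaps q ha
    have hpow : c ^ N ≤ c ^ t.length := pow_le_pow_of_le_one hc0 hc1 hle
    have hgap' := hgap _ hu _ hv
    have htail := pow_length_mul_sub_le_compWord_sub hc0 hmaps hexp t (hmaps 0 hu) (hmaps 1 hv)
      (by linarith)
    simp only [compWord_append_cons]
    calc compWord φ t (φ 0 (compWord φ p b)) + c ^ N * γ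
        ≤ compWord φ t (φ 0 (compWord φ p b)) + c ^ t.length * γ := by gcongr
      _ ≤ compWord φ t (φ 0 (compWord φ p b)) +
            c ^ t.length * (φ 1 (compWord φ q a) - φ 0 (compWord φ p b)) := by
          gcongr; linarith
      _ ≤ compWord φ t (φ 1 (compWord φ q a)) := by linarith
  have hle : t.length ≤ (p ++ i :: t).length := by
    simp only [List.length_append, List.length_cons]; omega
  fin_cases i <;> fin_cases j
  · exact absurd rfl hij
  · exact Or.inl (key p q _ hle)
  · exact Or.inr (key q p _ hle)
  · exact absurd rfl hij

end compWord

theorem map_zero_add_le_map_one {φ : Fin 2 → ℝ → ℝ} {ρ : ℝ}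
    (hmono : ∀ i, MonotoneOn (φ i) (Set.Icc 0 1))
    (hcontr : ∀ i, ∀ x ∈ Set.Icc (0:ℝ) 1, ∀ y ∈ Set.Icc (0:ℝ) 1, x ≤ y →
      φ i y - φ i x ≤ ρ * (y - x))
    (h0 : φ 0 0 = 0) (h1 : φ 1 1 = 1) {u v : ℝ} (hu : u ∈ Set.Icc (0:ℝ) 1)
    (hv : v ∈ Set.Icc (0:ℝ) 1) : φ 0 u + (1 - 2 * ρ) ≤ φ 1 v := by
  have h0mem : (0:ℝ) ∈ Set.Icc (0:ℝ) 1 := by norm_num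
  have h1mem : (1:ℝ) ∈ Set.Icc (0:ℝ) 1 := by norm_num
  have hu1 := hmono 0 hu h1mem hu.2
  have hv0 := hmono 1 h0mem hv hv.1
  have h01 := hcontr 0 0 h0mem 1 h1mem zero_le_one
  have h10 := hcontr 1 0 h0mem 1 h1mem zero_le_one
  linarith

theorem stmt_2_general (φ : Fin 2 → ℝ → ℝ) (ρt ρ : ℝ)
    (hρt : 0 < ρt) (hρtρ : ρt ≤ ρ) (hρ : ρ < 1/2)
    (hmaps : ∀ i, Set.MapsTo (φ i) (Set.Icc 0 1) (Set.Icc 0 1))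
    (D : Fin 2 → ℝ → ℝ)
    (hder : ∀ i, ∀ x ∈ Set.Icc (0:ℝ) 1, HasDerivAt (φ i) (D i x) x)
    (hDlb : ∀ i, ∀ x ∈ Set.Icc (0:ℝ) 1, ρt ≤ D i x)
    (hDub : ∀ i, ∀ x ∈ Set.Icc (0:ℝ) 1, D i x ≤ ρ)
    (h0 : φ 0 0 = 0) (h1 : φ 1 1 = 1)
    (n : ℕ) (ω ω' : List (Fin 2))
    (hω : ω.length = n) (hω' : ω'.length = n) (hne : ω ≠ ω') :
    Disjoint (Set.Icc (compWord φ ω 0) (compWord φ ω 1))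
      (Set.Icc (compWord φ ω' 0) (compWord φ ω' 1)) ∧
    ∀ x ∈ Set.Icc (compWord φ ω 0) (compWord φ ω 1),
      ∀ y ∈ Set.Icc (compWord φ ω' 0) (compWord φ ω' 1),
        ρt ^ n * (1 - 2 * ρ) ≤ |x - y| := by
  have hexp i := (convex_Icc (0:ℝ) 1).mul_sub_le_image_sub_of_le_hasDerivAt (hder i) (hDlb i)
  have hcontr i := (convex_Icc (0:ℝ) 1).image_sub_le_mul_sub_of_hasDerivAt_le (hder i) (hDub i)
  have hgap : ∀ u ∈ Set.Icc (0:ℝ) 1, ∀ v ∈ Set.Icc (0:ℝ) 1, φ 0 u + (1 - 2 * ρ) ≤ φ 1 v :=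
    fun u hu v hv => map_zero_add_le_map_one (fun i => monotoneOn_of_mul_sub_le hρt.le (hexp i))
      hcontr h0 h1 hu hv
  have hsep := compWord_separated hρt.le (by linarith) (by linarith) hmaps hexp hgap
    (by norm_num : (0:ℝ) ∈ Set.Icc 0 1) (by norm_num : (1:ℝ) ∈ Set.Icc 0 1)
    (hω.trans hω'.symm) hne
  rw [hω] at hsep
  have hdist : ∀ x ∈ Set.Icc (compWord φ ω 0) (compWord φ ω 1),
      ∀ y ∈ Set.Icc (compWord φ ω' 0) (compWord φ ω' 1), ρt ^ n * (1 - 2 * ρ) ≤ |x - y| := by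
    intro x hx y hy
    rcases hsep with h | h
    · rw [abs_sub_comm]; exact le_abs.2 (Or.inl (by linarith [hx.2, hy.1]))
    · exact le_abs.2 (Or.inl (by linarith [hx.1, hy.2]))
  have hδ : 0 < ρt ^ n * (1 - 2 * ρ) := mul_pos (pow_pos hρt n) (by linarith)
  exact ⟨Set.disjoint_left.2 fun z hz hz' => by simpa using hδ.trans_le (hdist z hz z hz'), hdist⟩

theorem stmt_2 (φ : Fin 2 → ℝ → ℝ) (ρt ρ : ℝ)
    (hρt : 0 < ρt) (hρtρ : ρt ≤ ρ) (hρ : ρ < 1/2)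
    (hmaps : ∀ i, Set.MapsTo (φ i) (Set.Icc 0 1) (Set.Icc 0 1))
    (D : Fin 2 → ℝ → ℝ)
    (hder : ∀ i, ∀ x ∈ Set.Icc (0:ℝ) 1, HasDerivAt (φ i) (D i x) x)
    (hDlb : ∀ i, ∀ x ∈ Set.Icc (0:ℝ) 1, ρt ≤ D i x)
    (hDub : ∀ i, ∀ x ∈ Set.Icc (0:ℝ) 1, D i x ≤ ρ)
    (h0 : φ 0 0 = 0) (h1 : φ 1 1 = 1)
    (n : ℕ) (hn : 1 ≤ n) (ω ω' : List (Fin 2))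
    (hω : ω.length = n) (hω' : ω'.length = n) (hne : ω ≠ ω') :
    Disjoint (Set.Icc (compWord φ ω 0) (compWord φ ω 1))
      (Set.Icc (compWord φ ω' 0) (compWord φ ω' 1)) ∧
    ∀ x ∈ Set.Icc (compWord φ ω 0) (compWord φ ω 1),
      ∀ y ∈ Set.Icc (compWord φ ω' 0) (compWord φ ω' 1),
        ρt ^ n * (1 - 2 * ρ) ≤ |x - y| :=
  stmt_2_general φ ρt ρ hρt hρtρ hρ hmaps D hder hDlb hDub h0 h1 n ω ω' hω hω' hne
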